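/- arXiv:1805.03231 — 6 statements merged into one kernel-verified Lean document; each statement's English description precedes it below -/
import Mathlib

section
/- Let a, b ≥ 0 and 0 ≤ α ≤ 1, and set r₀ = min{α, 1-α}. Then a^α · b^(1-α) ≤ α·a + (1-α)·b - r₀·(√a - √b)². -/
theorem kittaneh_manasrah_refined_young (a b α : ℝ) (ha : 0 ≤ a) (hb : 0 ≤ b)
    (hα0 : 0 ≤ α) (hα1 : α ≤ 1) :
    a ^ α * b ^ (1 - α) ≤
      α * a + (1 - α) * b - min α (1 - α) * (Real.sqrt a - Real.sqrt b) ^ 2 := by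
  have hsa := Real.sqrt_nonneg a
  have hsb := Real.sqrt_nonneg b
  have hsa2 := Real.sq_sqrt ha
  have hsb2 := Real.sq_sqrt hb
  rcases le_total α (1/2) with h | h
  · have hmin : min α (1-α) = α := min_eq_left (by linarith)
    rw [hmin]
    have key := Real.geom_mean_le_arith_mean2_weighted
      (by linarith : (0:ℝ) ≤ 2*α) (by linarith : (0:ℝ) ≤ 1-2*α)
      (mul_nonneg hsa hsb) hb (by ring)
    have h1 : (Real.sqrt a * Real.sqrt b) ^ (2*α) * b ^ (1-2*α) = a ^ α * b ^ (1-α) := by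
      rw [Real.mul_rpow hsa hsb, Real.sqrt_eq_rpow, Real.sqrt_eq_rpow,
        ← Real.rpow_mul ha, ← Real.rpow_mul hb, mul_assoc,
        ← Real.rpow_add' hb (by intro hc; nlinarith : (1:ℝ)/2*(2*α) + (1-2*α) ≠ 0)]
      norm_num
      ring_nf
    rw [h1] at key
    nlinarith [key]
  · have hmin : min α (1-α) = 1-α := min_eq_right (by linarith)
    rw [hmin]
    have key := Real.geom_mean_le_arith_mean2_weighted
      (by linarith : (0:ℝ) ≤ 2*α-1) (by linarith : (0:ℝ) ≤ 2*(1-α))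
      ha (mul_nonneg hsa hsb) (by ring)
    have h1 : a ^ (2*α-1) * (Real.sqrt a * Real.sqrt b) ^ (2*(1-α)) = a ^ α * b ^ (1-α) := by
      rw [Real.mul_rpow hsa hsb, Real.sqrt_eq_rpow, Real.sqrt_eq_rpow,
        ← Real.rpow_mul ha, ← Real.rpow_mul hb, ← mul_assoc,
        ← Real.rpow_add' ha (by intro hc; nlinarith : (2*α-1) + (1:ℝ)/2*(2*(1-α)) ≠ 0)]
      norm_num
      ring_nf
    rw [h1] at key
    nlinarith [key]
end

section
/- Let T be a bounded linear operator on a complex Hilbert space H, let x, y ∈ H, and let 0 ≤ α ≤ 1. Then |⟨T x, y⟩|² ≤ ⟨|T|^(2α) x, x⟩ · ⟨|T*|^(2(1-α)) y, y⟩, where |T| = (T*T)^(1/2). -/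
open scoped InnerProductSpace
open ContinuousLinearMap Complex

variable {H : Type*} [NormedAddCommGroup H] [InnerProductSpace ℂ H] [CompleteSpace H]

/-- `T ^ e` for a (positive) operator `T`, via the continuous functional calculus. -/
noncomputable def opow (T : H →L[ℂ] H) (e : ℝ) : H →L[ℂ] H :=
  cfc (fun t : ℝ => t ^ e) T

/-- The absolute value `|T| = (T*T)^(1/2)` of an operator. -/
noncomputable def oabs (T : H →L[ℂ] H) : H →L[ℂ] H :=
  cfc Real.sqrt (ContinuousLinearMap.adjoint T * T)

/-!
For `ε > 0` write `T = R† S` with `S = (T†T + ε)^(α/2)` and `R = (T†T + ε)^(-α/2) T†`.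
Cauchy–Schwarz gives `|⟪T x, y⟫|² ≤ ⟪S†S x, x⟫ ⟪R†R y, y⟫` with `S†S = (T†T + ε)^α`, and as
`T` intertwines `T†T` with `TT†`, `R†R = (TT† + ε)^(-α) TT† ≤ (TT†)^(1-α)`.
As `ε → 0`, `(t + ε)^α → t^α` uniformly on the spectrum, so `(T†T + ε)^α → |T|^(2α)`.
-/

open Filter Topology

theorem Real.continuousOn_add_rpow_const {ε : ℝ} (hε : 0 < ε) (r : ℝ) :
    ContinuousOn (fun t : ℝ ↦ (t + ε) ^ r) (Set.Ici 0) :=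
  (continuousOn_id.add continuousOn_const).rpow_const fun _ ht ↦
    .inl (add_pos_of_nonneg_of_pos ht hε).ne'

theorem Real.add_rpow_neg_mul_le_rpow_one_sub {t ε α : ℝ} (ht : 0 ≤ t) (hε : 0 ≤ ε)
    (hα : 0 ≤ α) : (t + ε) ^ (-α) * t ≤ t ^ (1 - α) := by
  rcases ht.eq_or_lt with rfl | ht
  · simpa using Real.rpow_nonneg le_rfl (1 - α)
  calc (t + ε) ^ (-α) * t ≤ t ^ (-α) * t := by
        have := Real.rpow_le_rpow_of_nonpos ht (le_add_of_nonneg_right hε) (neg_nonpos.2 hα)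
        gcongr
    _ = t ^ (1 - α) := by rw [sub_eq_neg_add, Real.rpow_add ht, Real.rpow_one]

section Continuity

variable {X R A : Type*} {p : A → Prop} [CommSemiring R] [StarRing R] [MetricSpace R]
  [IsTopologicalSemiring R] [ContinuousStar R] [Ring A] [StarRing A]
  [TopologicalSpace A] [Algebra R A] [ContinuousFunctionalCalculus R A p]

theorem continuous_cfc_of_continuous_uncurry [TopologicalSpace X] {F : X → R → R}
    (hF : Continuous (Function.uncurry F)) (a : A) : Continuous fun x ↦ cfc (F x) a := by
  refine continuous_iff_continuousAt.2 fun x₀ ↦ continuousAt_cfc_fun (fun u hu ↦ ?_)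
    (.of_forall fun x ↦ (hF.comp (Continuous.prodMk_right x)).continuousOn)
  obtain ⟨v, hv, hvu⟩ :=
    (ContinuousFunctionalCalculus.isCompact_spectrum a).mem_uniformity_of_prod
      hF.continuousOn (Set.mem_univ x₀) (symm_le_uniformity hu)
  rw [nhdsWithin_univ] at hv
  filter_upwards [hv] with x hx t ht using hvu x hx t ht

end Continuity

section RealCFC

variable {A : Type*} [Ring A] [StarRing A] [Algebra ℝ A] [TopologicalSpace A]
  [ContinuousFunctionalCalculus ℝ A IsSelfAdjoint]

theorem SemiconjBy.cfc_real [IsTopologicalRing A] [T2Space A] {a b x : A}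
    (h : SemiconjBy x a b) (ha : IsSelfAdjoint a) (hb : IsSelfAdjoint b) (f : ℝ → ℝ)
    (hf : ContinuousOn f (spectrum ℝ a ∪ spectrum ℝ b)) :
    SemiconjBy x (cfc f a) (cfc f b) := by
  set s := spectrum ℝ a ∪ spectrum ℝ b
  have : CompactSpace s := isCompact_iff_compactSpace.mp
    ((ContinuousFunctionalCalculus.isCompact_spectrum a).union
      (ContinuousFunctionalCalculus.isCompact_spectrum b))
  have hsa : spectrum ℝ a ⊆ s := Set.subset_union_left
  have hsb : spectrum ℝ b ⊆ s := Set.subset_union_right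
  have hsemi (g : C(s, ℝ)) :
      SemiconjBy x (cfcHomSuperset ha hsa g) (cfcHomSuperset hb hsb g) := by
    induction g using ContinuousMap.induction_on_of_compact with
    | const r =>
      change SemiconjBy x (cfcHomSuperset ha hsa (algebraMap ℝ _ r))
        (cfcHomSuperset hb hsb (algebraMap ℝ _ r))
      rw [AlgHomClass.commutes, AlgHomClass.commutes]
      exact Algebra.commute_algebraMap_right r x
    | id => simpa only [cfcHomSuperset_id] using h
    | star_id => simpa only [star_trivial, cfcHomSuperset_id] using h
    | add f g hf hg => simpa only [map_add] using hf.add_right hg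
    | mul f g hf hg => simpa only [map_mul] using hf.mul_right hg
    | frequently f hf =>
      exact (isClosed_eq ((continuous_const_mul x).comp (cfcHomSuperset_continuous ha hsa))
        ((continuous_mul_const x).comp (cfcHomSuperset_continuous hb hsb))
        ).mem_of_frequently_of_tendsto hf tendsto_id
  have hcfc (c : A) (hc : IsSelfAdjoint c) (hcs : spectrum ℝ c ⊆ s) :
      cfc f c = cfcHomSuperset hc hcs ⟨s.domRestrict f, hf.domRestrict⟩ := by
    rw [cfc_apply f c hc (hf.mono hcs)]
    rfl
  rw [hcfc a ha hsa, hcfc b hb hsb]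
  exact hsemi _

theorem cfc_add_rpow_mul_cfc_add_rpow {a : A} (ha : spectrum ℝ a ⊆ Set.Ici 0) {ε : ℝ}
    (hε : 0 < ε) (r s : ℝ) :
    cfc (fun t ↦ (t + ε) ^ r) a * cfc (fun t ↦ (t + ε) ^ s) a =
      cfc (fun t ↦ (t + ε) ^ (r + s)) a := by
  rw [← cfc_mul _ _ a ((Real.continuousOn_add_rpow_const hε r).mono ha)
    ((Real.continuousOn_add_rpow_const hε s).mono ha)]
  exact cfc_congr fun t ht ↦ (Real.rpow_add (add_pos_of_nonneg_of_pos (ha ht) hε) r s).symm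

theorem tendsto_cfc_add_rpow (a : A) {α : ℝ} (hα : 0 ≤ α) :
    Tendsto (fun ε : ℝ ↦ cfc (fun t ↦ (t + ε) ^ α) a) (𝓝 0)
      (𝓝 (cfc (fun t : ℝ ↦ t ^ α) a)) := by
  simpa using (continuous_cfc_of_continuous_uncurry (F := fun ε t : ℝ ↦ (t + ε) ^ α)
    ((Real.continuous_rpow_const hα).comp (continuous_snd.add continuous_fst)) a).tendsto 0

end RealCFC

section CStarAlgebra

variable {A : Type*} [CStarAlgebra A] [PartialOrder A] [StarOrderedRing A]

theorem spectrum_star_mul_self_subset_Ici (a : A) : spectrum ℝ (star a * a) ⊆ Set.Ici 0 :=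
  fun _ ht ↦ spectrum_nonneg_of_nonneg (star_mul_self_nonneg a) ht

theorem cfc_rpow_two_mul_cfc_sqrt_star_mul_self (a : A) {c : ℝ} (hc : 0 ≤ c) :
    cfc (fun t : ℝ ↦ t ^ (2 * c)) (cfc Real.sqrt (star a * a)) =
      cfc (fun t : ℝ ↦ t ^ c) (star a * a) := by
  rw [← cfc_comp' _ _ _ (Real.continuous_rpow_const (by positivity)).continuousOn]
  refine cfc_congr fun t ht ↦ ?_
  rw [Real.sqrt_eq_rpow, ← Real.rpow_mul (spectrum_star_mul_self_subset_Ici a ht)]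
  ring_nf

theorem exists_eq_star_mul_of_pos (a : A) {α ε : ℝ} (hε : 0 < ε) (hα0 : 0 ≤ α)
    (hα1 : α ≤ 1) :
    ∃ r s : A, a = star r * s ∧
      star s * s = cfc (fun t ↦ (t + ε) ^ α) (star a * a) ∧
      star r * r ≤ cfc (fun t : ℝ ↦ t ^ (1 - α)) (a * star a) := by
  have hA := spectrum_star_mul_self_subset_Ici a
  have hB : spectrum ℝ (a * star a) ⊆ Set.Ici 0 := by
    simpa using spectrum_star_mul_self_subset_Ici (star a)
  refine ⟨cfc (fun t ↦ (t + ε) ^ (-(α / 2))) (star a * a) * star a,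
    cfc (fun t ↦ (t + ε) ^ (α / 2)) (star a * a), ?_, ?_, ?_⟩
  · rw [star_mul, star_star, IsSelfAdjoint.cfc.star_eq, mul_assoc,
      cfc_add_rpow_mul_cfc_add_rpow hA hε, neg_add_cancel]
    simp only [Real.rpow_zero, cfc_const_one ℝ (star a * a), mul_one]
  · rw [IsSelfAdjoint.cfc.star_eq, cfc_add_rpow_mul_cfc_add_rpow hA hε, add_halves]
  have hsemi : SemiconjBy a (star a * a) (a * star a) := (mul_assoc _ _ _).symm
  calc _ = a * cfc (fun t : ℝ ↦ (t + ε) ^ (-α)) (star a * a) * star a := by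
        rw [star_mul, star_star, IsSelfAdjoint.cfc.star_eq, mul_assoc, ← mul_assoc (cfc _ _),
          cfc_add_rpow_mul_cfc_add_rpow hA hε, ← mul_assoc, ← neg_add, add_halves]
    _ = cfc (fun t ↦ (t + ε) ^ (-α)) (a * star a) * (a * star a) := by
        rw [(hsemi.cfc_real (by cfc_tac) (by cfc_tac) _
          ((Real.continuousOn_add_rpow_const hε _).mono (Set.union_subset hA hB))).eq, mul_assoc]
    _ = cfc (fun t ↦ (t + ε) ^ (-α) * t) (a * star a) := by
        rw [cfc_mul _ _ _ ((Real.continuousOn_add_rpow_const hε _).mono hB),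
          cfc_id' ℝ (a * star a)]
    _ ≤ cfc (fun t : ℝ ↦ t ^ (1 - α)) (a * star a) :=
        cfc_mono (fun t ht ↦ Real.add_rpow_neg_mul_le_rpow_one_sub (hB ht) hε.le hα0)
          (((Real.continuousOn_add_rpow_const hε _).mul continuousOn_id).mono hB)
          ((Real.continuous_rpow_const (by linarith)).continuousOn)

end CStarAlgebra

section InnerProduct

variable {𝕜 E : Type*} [RCLike 𝕜] [NormedAddCommGroup E] [InnerProductSpace 𝕜 E]

theorem ContinuousLinearMap.re_inner_le_re_inner_of_le {S S' : E →L[𝕜] E} (h : S ≤ S')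
    (x : E) : RCLike.re ⟪S x, x⟫_𝕜 ≤ RCLike.re ⟪S' x, x⟫_𝕜 := by
  have := h.re_inner_nonneg_left x
  rw [sub_apply, inner_sub_left, map_sub] at this
  linarith

variable [CompleteSpace E]

theorem ContinuousLinearMap.re_inner_star_mul_self_apply (s : E →L[𝕜] E) (x : E) :
    RCLike.re ⟪(star s * s) x, x⟫_𝕜 = ‖s x‖ ^ 2 :=
  (apply_norm_sq_eq_inner_adjoint_left s x).symm

theorem norm_inner_star_mul_apply_sq_le (r s : E →L[𝕜] E) (x y : E) :
    ‖⟪(star r * s) x, y⟫_𝕜‖ ^ 2 ≤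
      RCLike.re ⟪(star s * s) x, x⟫_𝕜 * RCLike.re ⟪(star r * r) y, y⟫_𝕜 := by
  rw [re_inner_star_mul_self_apply, re_inner_star_mul_self_apply, ← mul_pow, mul_apply_eq_comp,
    star_eq_adjoint, adjoint_inner_left]
  gcongr
  exact norm_inner_le_norm _ _

end InnerProduct

theorem norm_inner_apply_sq_le_of_pos (T : H →L[ℂ] H) (x y : H) {α ε : ℝ} (hε : 0 < ε)
    (hα0 : 0 ≤ α) (hα1 : α ≤ 1) :
    ‖⟪T x, y⟫_ℂ‖ ^ 2 ≤ (⟪cfc (fun t ↦ (t + ε) ^ α) (star T * T) x, x⟫_ℂ).re *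
      (⟪cfc (fun t : ℝ ↦ t ^ (1 - α)) (T * star T) y, y⟫_ℂ).re := by
  obtain ⟨r, s, rfl, hs, hr⟩ := exists_eq_star_mul_of_pos T hε hα0 hα1
  rw [← hs]
  refine (norm_inner_star_mul_apply_sq_le r s x y).trans ?_
  have hs0 : 0 ≤ RCLike.re ⟪(star s * s) x, x⟫_ℂ := by
    rw [re_inner_star_mul_self_apply]
    positivity
  exact mul_le_mul_of_nonneg_left (re_inner_le_re_inner_of_le hr y) hs0

/-- Generalized mixed Schwarz inequality. -/
theorem mixed_schwarz (T : H →L[ℂ] H) (x y : H) (α : ℝ) (hα0 : 0 ≤ α) (hα1 : α ≤ 1) :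
    ‖⟪T x, y⟫_ℂ‖ ^ 2 ≤
      (⟪opow (oabs T) (2 * α) x, x⟫_ℂ).re *
        (⟪opow (oabs (ContinuousLinearMap.adjoint T)) (2 * (1 - α)) y, y⟫_ℂ).re := by
  have hB := cfc_rpow_two_mul_cfc_sqrt_star_mul_self (star T) (sub_nonneg.2 hα1)
  rw [star_star] at hB
  simp only [opow, oabs, ← star_eq_adjoint, star_star]
  rw [cfc_rpow_two_mul_cfc_sqrt_star_mul_self T hα0, hB]
  have hre : Continuous fun S : H →L[ℂ] H ↦ (⟪S x, x⟫_ℂ).re := by fun_prop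
  have hlim := (((hre.tendsto _).comp (tendsto_cfc_add_rpow (star T * T) hα0)).mono_left
    (nhdsWithin_le_nhds (s := Set.Ioi 0))).mul_const
    (⟪cfc (fun t : ℝ ↦ t ^ (1 - α)) (T * star T) y, y⟫_ℂ).re
  exact ge_of_tendsto hlim (eventually_nhdsWithin_of_forall fun ε hε ↦
    norm_inner_apply_sq_le_of_pos T x y hε hα0 hα1)
end

section
/- Let T be a positive bounded operator on a complex Hilbert space H and x a unit vector. Then ⟨T x, x⟩^r ≤ ⟨T^r x, x⟩ for every real r ≥ 1. -/
open scoped InnerProductSpace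
open ContinuousLinearMap Complex

variable {H : Type*} [NormedAddCommGroup H] [InnerProductSpace ℂ H] [CompleteSpace H]

/-! With `a = re ⟪T x, x⟫`, the convex function `t ↦ t ^ r` lies above its tangent line `ℓ` at `a`
on `[0, ∞) ⊇ spectrum ℝ T`. Monotonicity of the functional calculus gives `ℓ(T) ≤ T ^ r`, and since
`ℓ` is affine and `‖x‖ = 1`, `re ⟪ℓ(T) x, x⟫ = ℓ(a) = a ^ r`. -/

namespace Real

theorem rpow_add_mul_sub_le_rpow {a t r : ℝ} (ha : 0 ≤ a) (ht : 0 ≤ t) (hr : 1 ≤ r) :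
    a ^ r + r * a ^ (r - 1) * (t - a) ≤ t ^ r := by
  rcases ha.eq_or_lt with rfl | ha
  · rcases hr.eq_or_lt with rfl | hr
    · simp
    · simpa [zero_rpow (by linarith : r ≠ 0), zero_rpow (by linarith : r - 1 ≠ 0)]
        using rpow_nonneg ht r
  · have hs : -1 ≤ (t - a) / a := by rw [le_div_iff₀ ha]; linarith
    have bernoulli := one_add_mul_self_le_rpow_one_add hs hr
    calc a ^ r + r * a ^ (r - 1) * (t - a)
        = a ^ r * (1 + r * ((t - a) / a)) := by rw [rpow_sub ha, rpow_one]; field_simp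
      _ ≤ a ^ r * (1 + (t - a) / a) ^ r := by gcongr
      _ = t ^ r := by rw [← mul_rpow ha.le (by linarith)]; congr 1; field_simp; ring

end Real

namespace ContinuousLinearMap

theorem re_inner_le_re_inner_of_le_s4 {𝕜 E : Type*} [RCLike 𝕜] [NormedAddCommGroup E]
    [InnerProductSpace 𝕜 E] {A B : E →L[𝕜] E} (h : A ≤ B) (x : E) :
    RCLike.re ⟪A x, x⟫_𝕜 ≤ RCLike.re ⟪B x, x⟫_𝕜 := by
  have := ((le_def A B).mp h).re_inner_nonneg_left x
  rwa [sub_apply, inner_sub_left, map_sub, sub_nonneg] at this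

theorem re_inner_cfc_affine {T : H →L[ℂ] H} (hT : IsSelfAdjoint T) {x : H} (hx : ‖x‖ = 1)
    (α β s : ℝ) :
    (⟪cfc (fun t : ℝ => α + β * (t - s)) T x, x⟫_ℂ).re = α + β * ((⟪T x, x⟫_ℂ).re - s) := by
  rw [cfc_const_add α _ T, cfc_const_mul β _ T, cfc_sub .., cfc_id' ℝ T, cfc_const s T]
  simp [Algebra.algebraMap_eq_smul_one, hx]

end ContinuousLinearMap

/-- McCarthy's inequality. -/
theorem mccarthy_one (T : H →L[ℂ] H) (hT : T.IsPositive) (x : H) (hx : ‖x‖ = 1)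
    (r : ℝ) (hr : 1 ≤ r) :
    (⟪T x, x⟫_ℂ).re ^ r ≤ (⟪opow T r x, x⟫_ℂ).re := by
  set a := (⟪T x, x⟫_ℂ).re
  have tangent_le : ∀ t ∈ spectrum ℝ T, a ^ r + r * a ^ (r - 1) * (t - a) ≤ t ^ r :=
    fun t ht => Real.rpow_add_mul_sub_le_rpow (hT.re_inner_nonneg_left x)
      (spectrum_nonneg_of_nonneg ((nonneg_iff_isPositive T).mpr hT) ht) hr
  have h := re_inner_le_re_inner_of_le_s4
    (cfc_mono tangent_le (by fun_prop) (Real.continuous_rpow_const (by linarith)).continuousOn) x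
  rw [RCLike.re_to_complex, RCLike.re_to_complex] at h
  rwa [re_inner_cfc_affine hT.isSelfAdjoint hx, sub_self, mul_zero, add_zero] at h
end

section
/- Let T be a positive bounded operator on a complex Hilbert space H and x a unit vector. Then ⟨T^r x, x⟩ ≤ ⟨T x, x⟩^r for every real 0 < r ≤ 1. -/
open scoped InnerProductSpace
open ContinuousLinearMap Complex

variable {H : Type*} [NormedAddCommGroup H] [InnerProductSpace ℂ H] [CompleteSpace H]

/-- tangent line inequality for `t ^ r`, `0 < r ≤ 1`. -/
lemma rpow_tangent {t s r : ℝ} (ht : 0 ≤ t) (hs : 0 < s) (hr0 : 0 < r) (hr1 : r ≤ 1) :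
    t ^ r ≤ r * s ^ (r - 1) * t + (1 - r) * s ^ r := by
  have hu : 0 ≤ t / s := div_nonneg ht hs.le
  have hb : (1 + (t / s - 1)) ^ r ≤ 1 + r * (t / s - 1) :=
    rpow_one_add_le_one_add_mul_self (by linarith) hr0.le hr1
  rw [add_sub_cancel] at hb
  have ht' : t = s * (t / s) := by field_simp
  have hsub : s ^ (r - 1) = s ^ r / s := by
    rw [Real.rpow_sub hs, Real.rpow_one]
  calc t ^ r = (s * (t / s)) ^ r := by rw [← ht']
    _ = s ^ r * (t / s) ^ r := Real.mul_rpow hs.le hu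
    _ ≤ s ^ r * (1 + r * (t / s - 1)) :=
        mul_le_mul_of_nonneg_left hb (Real.rpow_nonneg hs.le r)
    _ = r * (s ^ r / s) * t + (1 - r) * s ^ r := by field_simp; ring
    _ = r * s ^ (r - 1) * t + (1 - r) * s ^ r := by rw [hsub]

/-- The second McCarthy inequality. -/
theorem mccarthy_two (T : H →L[ℂ] H) (hT : T.IsPositive) (x : H) (hx : ‖x‖ = 1)
    (r : ℝ) (hr0 : 0 < r) (hr1 : r ≤ 1) :
    (⟪opow T r x, x⟫_ℂ).re ≤ (⟪T x, x⟫_ℂ).re ^ r := by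
  have hsa : IsSelfAdjoint T := hT.isSelfAdjoint
  have hTnn : (0 : H →L[ℂ] H) ≤ T := (ContinuousLinearMap.nonneg_iff_isPositive T).mpr hT
  have ha : 0 ≤ (⟪T x, x⟫_ℂ).re := by
    have := hT.2 x
    rwa [ContinuousLinearMap.reApplyInnerSelf_apply] at this
  -- key inequality for every s > 0
  have key : ∀ s : ℝ, 0 < s →
      (⟪opow T r x, x⟫_ℂ).re ≤
        r * s ^ (r - 1) * (⟪T x, x⟫_ℂ).re + (1 - r) * s ^ r := by
    intro s hs
    have h1 : cfc (fun t : ℝ => r * s ^ (r - 1) * t + (1 - r) * s ^ r) T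
        = (r * s ^ (r - 1)) • T + ((1 - r) * s ^ r) • (1 : H →L[ℂ] H) := by
      rw [cfc_add T (fun t => r * s ^ (r - 1) * t) (fun _ => (1 - r) * s ^ r)
        (by fun_prop) (by fun_prop),
        cfc_const_mul_id (r * s ^ (r - 1)) T hsa, cfc_const ((1 - r) * s ^ r) T hsa]
      simp [Algebra.algebraMap_eq_smul_one]
    have hop : opow T r ≤
        (r * s ^ (r - 1)) • T + ((1 - r) * s ^ r) • (1 : H →L[ℂ] H) := by
      rw [opow, ← h1]
      exact cfc_mono
        (fun t ht => rpow_tangent (spectrum_nonneg_of_nonneg hTnn ht) hs hr0 hr1)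
        (fun t _ => (Real.continuousAt_rpow_const t r (Or.inr hr0.le)).continuousWithinAt)
        (by fun_prop)
    have hpos : (((r * s ^ (r - 1)) • T + ((1 - r) * s ^ r) • (1 : H →L[ℂ] H))
        - opow T r).IsPositive := (ContinuousLinearMap.le_def _ _).mp hop
    have h2 := hpos.2 x
    rw [ContinuousLinearMap.reApplyInnerSelf_apply] at h2
    simp only [RCLike.re_to_complex] at h2
    have h3 : (⟪(((r * s ^ (r - 1)) • T + ((1 - r) * s ^ r) • (1 : H →L[ℂ] H))
          - opow T r) x, x⟫_ℂ).re
        = r * s ^ (r - 1) * (⟪T x, x⟫_ℂ).re + (1 - r) * s ^ r * ‖x‖ ^ 2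
          - (⟪opow T r x, x⟫_ℂ).re := by
      simp only [ContinuousLinearMap.sub_apply, ContinuousLinearMap.add_apply,
        ContinuousLinearMap.smul_apply, ContinuousLinearMap.one_apply,
        inner_sub_left, inner_add_left]
      rw [RCLike.real_smul_eq_coe_smul (K := ℂ) (r * s ^ (r - 1)) (T x),
        RCLike.real_smul_eq_coe_smul (K := ℂ) ((1 - r) * s ^ r) x,
        inner_smul_left, inner_smul_left, inner_self_eq_norm_sq_to_K (𝕜 := ℂ)]
      simp [← Complex.ofReal_pow]
    rw [h3, hx] at h2
    nlinarith [h2]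
  rcases eq_or_lt_of_le ha with ha0 | ha0
  · -- ⟪T x, x⟫.re = 0
    rw [← ha0, Real.zero_rpow hr0.ne']
    have htend : Filter.Tendsto
        (fun s : ℝ => r * s ^ (r - 1) * (⟪T x, x⟫_ℂ).re + (1 - r) * s ^ r)
        (nhdsWithin 0 (Set.Ioi 0)) (nhds 0) := by
      have h1 : Filter.Tendsto (fun s : ℝ => s ^ r) (nhdsWithin 0 (Set.Ioi 0)) (nhds 0) := by
        have := (Real.continuousAt_rpow_const 0 r (Or.inr hr0.le)).continuousWithinAt
          (s := Set.Ioi (0:ℝ))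
        simpa [Real.zero_rpow hr0.ne', ContinuousWithinAt] using this
      have h2 := h1.const_mul (1 - r)
      simpa [← ha0] using h2
    exact ge_of_tendsto htend (eventually_nhdsWithin_of_forall fun s hs => key s hs)
  · -- ⟪T x, x⟫.re > 0
    have hkey := key _ ha0
    have haa : (⟪T x, x⟫_ℂ).re ^ (r - 1) * (⟪T x, x⟫_ℂ).re = (⟪T x, x⟫_ℂ).re ^ r := by
      rw [Real.rpow_sub ha0, Real.rpow_one]
      field_simp
    calc (⟪opow T r x, x⟫_ℂ).re
        ≤ r * (⟪T x, x⟫_ℂ).re ^ (r - 1) * (⟪T x, x⟫_ℂ).re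
          + (1 - r) * (⟪T x, x⟫_ℂ).re ^ r := hkey
      _ = r * (⟪T x, x⟫_ℂ).re ^ r + (1 - r) * (⟪T x, x⟫_ℂ).re ^ r := by
          rw [mul_assoc, haa]
      _ = (⟪T x, x⟫_ℂ).re ^ r := by ring
end

section
/- Let A, B, X be bounded operators on a complex Hilbert space H and 0 ≤ α ≤ 1. Then for every unit vector k ∈ H, |⟨A* X B k, k⟩| ≤ (1/2)·⟨(B*|X|^(2α)B + A*|X*|^(2(1-α))A) k, k⟩. -/
/-!
The pointwise bound is the mixed Schwarz inequality
`‖⟪X x, y⟫‖ ≤ ‖|X| ^ α x‖ * ‖|X*| ^ (1 - α) y‖` applied to `x = B k`, `y = A k`, followed by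
`2 u v ≤ u ^ 2 + v ^ 2`.

Mixed Schwarz is proved without polar decomposition. With `c = |X|`, `d = |X*|` and `ε > 0`,
split `x = c (c + ε)⁻¹ x + ε (c + ε)⁻¹ x`. The intertwining relation `X f(|X|) = f(|X*|) X`
rewrites the first part as `⟪|X| ^ α x, X* q(d) y⟫` with `q(s) = s ^ (1 - α) / (s + ε)`, and
`‖X* q(d) y‖ = ‖d q(d) y‖ ≤ ‖|X*| ^ (1 - α) y‖`. The second part contributes at most
`ε ‖x‖ ‖y‖`, because `‖X z‖ = ‖|X| z‖` and `s ε / (s + ε) ≤ ε`.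
-/

open scoped InnerProductSpace
open ContinuousLinearMap Complex

variable {H : Type*} [NormedAddCommGroup H] [InnerProductSpace ℂ H] [CompleteSpace H]

section NonUnital

variable {A : Type*} [NonUnitalCStarAlgebra A]

open scoped ContinuousMapZero

theorem mul_cfcₙ_star_mul_self (a : A) (f : ℝ → ℝ) :
    a * cfcₙ f (star a * a) = cfcₙ f (a * star a) * a := by
  have hσ : quasispectrum ℝ (star a * a) = quasispectrum ℝ (a * star a) :=
    quasispectrum.mul_comm _ _
  -- Off its domain `cfcₙ` is `0`, and both sides leave the domain together.
  by_cases hf : ContinuousOn f (quasispectrum ℝ (star a * a))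
  swap
  · rw [cfcₙ_apply_of_not_continuousOn _ hf, cfcₙ_apply_of_not_continuousOn _ (hσ ▸ hf),
      mul_zero, zero_mul]
  by_cases hf0 : f 0 = 0
  swap
  · rw [cfcₙ_apply_of_not_map_zero _ hf0, cfcₙ_apply_of_not_map_zero _ hf0, mul_zero,
      zero_mul]
  have ha : IsSelfAdjoint (star a * a) := .star_mul_self a
  have hb : IsSelfAdjoint (a * star a) := .mul_star_self a
  let ι : C(quasispectrum ℝ (a * star a), quasispectrum ℝ (star a * a))₀ :=
    ⟨⟨fun s => ⟨s, hσ.symm ▸ s.2⟩, by fun_prop⟩, rfl⟩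
  let ψ := (cfcₙHom hb).comp (ContinuousMapZero.nonUnitalStarAlgHom_precomp ℝ ι)
  have hψ : Continuous ψ :=
    (cfcₙHom_continuous hb).comp (ContinuousMapZero.continuous_precomp ι)
  have key (g : C(quasispectrum ℝ (star a * a), ℝ)₀) : a * cfcₙHom ha g = ψ g * a := by
    induction g using ContinuousMapZero.induction_on_of_compact with
    | zero => simp
    | id =>
      change a * cfcₙHom ha (.id _) = cfcₙHom hb (.id _) * a
      rw [cfcₙHom_id, cfcₙHom_id, ← mul_assoc, mul_assoc]
    | star_id =>
      change a * cfcₙHom ha (star (.id _)) = cfcₙHom hb (star (.id _)) * a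
      rw [map_star, map_star, cfcₙHom_id, cfcₙHom_id, ha.star_eq, hb.star_eq, ← mul_assoc,
        mul_assoc]
    | add g h hg hh => rw [map_add, map_add, mul_add, add_mul, hg, hh]
    | mul g h hg hh => rw [map_mul, map_mul, ← mul_assoc, hg, mul_assoc, hh, mul_assoc]
    | smul r g hg => rw [map_smul, map_smul, mul_smul_comm, hg, smul_mul_assoc]
    | frequently g hg =>
      exact hg.mem_of_closed <| isClosed_eq (by fun_prop) (hψ.mul continuous_const)
  rw [cfcₙ_apply f (star a * a), cfcₙ_apply f (a * star a) (hσ ▸ hf), key]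
  rfl

end NonUnital

section Unital

variable {A : Type*} [CStarAlgebra A] [PartialOrder A] [StarOrderedRing A]

theorem cfc_abs_eq (a : A) {f : ℝ → ℝ} (hf : ContinuousOn f (Set.Ici 0)) :
    cfc f (CFC.abs a) = cfcₙ (fun s => f √s - f 0) (star a * a) + algebraMap ℝ A (f 0) := by
  have hf_sqrt : ContinuousOn (fun s => f √s - f 0) (Set.Ici 0) :=
    (hf.comp Real.continuous_sqrt.continuousOn fun s _ => Real.sqrt_nonneg s).sub
      continuousOn_const
  have hσ : quasispectrum ℝ (star a * a) ⊆ Set.Ici 0 :=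
    quasispectrum_nonneg_of_nonneg _ (star_mul_self_nonneg a)
  rw [CFC.abs, CFC.sqrt_eq_real_sqrt _, cfcₙ_eq_cfc,
    ← cfc_comp' f Real.sqrt _
      (hf.mono <| Set.image_subset_iff.mpr fun s _ => Real.sqrt_nonneg s),
    cfcₙ_eq_cfc (hf_sqrt.mono hσ) (by simp),
    ← cfc_add_const _ _ _ (hf_sqrt.mono ((spectrum_subset_quasispectrum ℝ _).trans hσ))]
  simp

theorem mul_cfc_abs (a : A) {f : ℝ → ℝ} (hf : ContinuousOn f (Set.Ici 0)) :
    a * cfc f (CFC.abs a) = cfc f (CFC.abs (star a)) * a := by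
  rw [cfc_abs_eq a hf, cfc_abs_eq _ hf, star_star, mul_add, add_mul, mul_cfcₙ_star_mul_self,
    Algebra.commutes]

variable {c : A} {ε : ℝ}

theorem ContinuousOn.div_add_of_nonneg {f : ℝ → ℝ} (hf : ContinuousOn f (spectrum ℝ c))
    (hε : 0 < ε) (hc : 0 ≤ c) : ContinuousOn (fun s => f s / (s + ε)) (spectrum ℝ c) :=
  hf.div (by fun_prop) fun s hs => by linarith [spectrum_nonneg_of_nonneg hc hs]

theorem cfc_div_add_add_cfc_const_div_add (hε : 0 < ε) (hc : 0 ≤ c) :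
    cfc (fun s => s / (s + ε)) c + cfc (fun s => ε / (s + ε)) c = 1 := by
  rw [← cfc_add _ _ _ ((continuousOn_id' _).div_add_of_nonneg hε hc)
    (continuousOn_const.div_add_of_nonneg hε hc), ← cfc_const_one ℝ c]
  refine cfc_congr fun s hs => ?_
  have : s + ε ≠ 0 := by linarith [spectrum_nonneg_of_nonneg hc hs]
  field_simp

theorem norm_cfc_div_add_le_one (hε : 0 < ε) (hc : 0 ≤ c) :
    ‖cfc (fun s => s / (s + ε)) c‖ ≤ 1 := by
  refine norm_cfc_le zero_le_one fun s hs => ?_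
  have hs : 0 ≤ s := spectrum_nonneg_of_nonneg hc hs
  rw [Real.norm_of_nonneg (by positivity), div_le_one (by positivity)]
  linarith

theorem mul_cfc_const_div_add (hε : 0 < ε) (hc : 0 ≤ c) :
    c * cfc (fun s => ε / (s + ε)) c = ε • cfc (fun s => s / (s + ε)) c := by
  nth_rewrite 1 [← cfc_id' ℝ c]
  rw [← cfc_mul _ _ _ (continuousOn_id' _) (continuousOn_const.div_add_of_nonneg hε hc),
    ← cfc_smul _ _ _ ((continuousOn_id' _).div_add_of_nonneg hε hc)]
  refine cfc_congr fun s _ => ?_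
  simp only [smul_eq_mul]
  ring

theorem cfc_div_add_eq_cfc_rpow_div_add_mul_cfc_rpow {α : ℝ} (hα0 : 0 ≤ α) (hα1 : α ≤ 1)
    (hε : 0 < ε) (hc : 0 ≤ c) :
    cfc (fun s => s / (s + ε)) c =
      cfc (fun s => s ^ (1 - α) / (s + ε)) c * cfc (fun s : ℝ => s ^ α) c := by
  rw [← cfc_mul _ _ _
    ((Real.continuous_rpow_const (by linarith)).continuousOn.div_add_of_nonneg hε hc)
    (Real.continuous_rpow_const hα0).continuousOn]
  refine cfc_congr fun s hs => ?_
  have hs : 0 ≤ s := spectrum_nonneg_of_nonneg hc hs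
  rw [div_mul_eq_mul_div, ← Real.rpow_add_of_nonneg hs (by linarith) hα0, sub_add_cancel,
    Real.rpow_one]

theorem mul_cfc_rpow_div_add {β : ℝ} (hβ : 0 ≤ β) (hε : 0 < ε) (hc : 0 ≤ c) :
    c * cfc (fun s => s ^ β / (s + ε)) c =
      cfc (fun s => s / (s + ε)) c * cfc (fun s : ℝ => s ^ β) c := by
  nth_rewrite 1 [← cfc_id' ℝ c]
  rw [← cfc_mul _ _ _ (continuousOn_id' _)
    ((Real.continuous_rpow_const hβ).continuousOn.div_add_of_nonneg hε hc),
    ← cfc_mul _ _ _ ((continuousOn_id' _).div_add_of_nonneg hε hc)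
    (Real.continuous_rpow_const hβ).continuousOn]
  refine cfc_congr fun s _ => ?_
  ring

end Unital

theorem oabs_eq_abs (X : H →L[ℂ] H) : oabs X = CFC.abs X := by
  rw [oabs, CFC.abs, CFC.sqrt_eq_real_sqrt _, cfcₙ_eq_cfc, star_eq_adjoint]

theorem oabs_nonneg (X : H →L[ℂ] H) : 0 ≤ oabs X := oabs_eq_abs X ▸ CFC.abs_nonneg X

theorem norm_oabs_apply (X : H →L[ℂ] H) (v : H) : ‖oabs X v‖ = ‖X v‖ := by
  refine (pow_left_inj₀ (norm_nonneg _) (norm_nonneg _) two_ne_zero).mp ?_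
  rw [apply_norm_sq_eq_inner_adjoint_left, apply_norm_sq_eq_inner_adjoint_left, oabs_eq_abs,
    ← star_eq_adjoint, ← star_eq_adjoint, (CFC.abs_nonneg X).isSelfAdjoint.star_eq,
    ← mul_def, ← mul_def, CFC.abs_mul_abs]

theorem mul_cfc_oabs (X : H →L[ℂ] H) {f : ℝ → ℝ} (hf : ContinuousOn f (Set.Ici 0)) :
    X * cfc f (oabs X) = cfc f (oabs (adjoint X)) * X := by
  rw [oabs_eq_abs, oabs_eq_abs, ← star_eq_adjoint, mul_cfc_abs X hf]

theorem norm_cfc_div_add_apply_le {c : H →L[ℂ] H} {ε : ℝ} (hε : 0 < ε) (hc : 0 ≤ c)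
    (v : H) :
    ‖cfc (fun s => s / (s + ε)) c v‖ ≤ ‖v‖ := by
  simpa using (cfc (fun s => s / (s + ε)) c).le_of_opNorm_le (norm_cfc_div_add_le_one hε hc) v

theorem norm_apply_cfc_const_div_add_le (X : H →L[ℂ] H) {ε : ℝ} (hε : 0 < ε) (x : H) :
    ‖X (cfc (fun s => ε / (s + ε)) (oabs X) x)‖ ≤ ε * ‖x‖ := by
  rw [← norm_oabs_apply, ← mul_apply_eq_comp, mul_cfc_const_div_add hε (oabs_nonneg X),
    smul_apply, norm_smul, Real.norm_of_nonneg hε.le]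
  gcongr
  exact norm_cfc_div_add_apply_le hε (oabs_nonneg X) x

theorem norm_inner_apply_cfc_div_add_le (X : H →L[ℂ] H) {α ε : ℝ} (hα0 : 0 ≤ α)
    (hα1 : α ≤ 1) (hε : 0 < ε) (x y : H) :
    ‖⟪X (cfc (fun s => s / (s + ε)) (oabs X) x), y⟫_ℂ‖ ≤
      ‖opow (oabs X) α x‖ * ‖opow (oabs (adjoint X)) (1 - α) y‖ := by
  set c := oabs X
  set d := oabs (adjoint X)
  set q := fun s : ℝ => s ^ (1 - α) / (s + ε)
  have hq : ContinuousOn q (Set.Ici 0) :=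
    (Real.continuous_rpow_const (by linarith)).continuousOn.div (by fun_prop)
      fun s hs => by linarith [Set.mem_Ici.mp hs]
  calc ‖⟪X (cfc (fun s => s / (s + ε)) c x), y⟫_ℂ‖
      = ‖⟪(cfc q d * X) (opow c α x), y⟫_ℂ‖ := by
        rw [cfc_div_add_eq_cfc_rpow_div_add_mul_cfc_rpow hα0 hα1 hε (oabs_nonneg X),
          ← mul_cfc_oabs X hq]
        rfl
    _ = ‖⟪opow c α x, adjoint X (cfc q d y)⟫_ℂ‖ := by
        rw [mul_apply_eq_comp, adjoint_inner_right, ← adjoint_inner_left,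
          (cfc_predicate q d).adjoint_eq]
    _ ≤ ‖opow c α x‖ * ‖d (cfc q d y)‖ := by
        rw [norm_oabs_apply]
        exact norm_inner_le_norm _ _
    _ ≤ ‖opow c α x‖ * ‖opow d (1 - α) y‖ := by
        rw [← mul_apply_eq_comp, mul_cfc_rpow_div_add (by linarith) hε (oabs_nonneg (adjoint X)),
          mul_apply_eq_comp]
        gcongr
        exact norm_cfc_div_add_apply_le hε (oabs_nonneg (adjoint X)) _

theorem norm_inner_apply_le_mixed_add (X : H →L[ℂ] H) {α ε : ℝ} (hα0 : 0 ≤ α) (hα1 : α ≤ 1)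
    (hε : 0 < ε) (x y : H) :
    ‖⟪X x, y⟫_ℂ‖ ≤
      ‖opow (oabs X) α x‖ * ‖opow (oabs (adjoint X)) (1 - α) y‖ + ε * (‖x‖ * ‖y‖) := by
  set r := cfc (fun s => s / (s + ε)) (oabs X)
  set e := cfc (fun s => ε / (s + ε)) (oabs X)
  have hsplit : x = r x + e x := by
    rw [← add_apply, cfc_div_add_add_cfc_const_div_add hε (oabs_nonneg X), one_apply_eq_self]
  calc ‖⟪X x, y⟫_ℂ‖
      = ‖⟪X (r x), y⟫_ℂ + ⟪X (e x), y⟫_ℂ‖ := by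
        rw [← inner_add_left, ← map_add, ← hsplit]
    _ ≤ ‖⟪X (r x), y⟫_ℂ‖ + ‖X (e x)‖ * ‖y‖ :=
        norm_add_le_of_le le_rfl (norm_inner_le_norm _ _)
    _ ≤ ‖opow (oabs X) α x‖ * ‖opow (oabs (adjoint X)) (1 - α) y‖
          + ε * ‖x‖ * ‖y‖ := by
        gcongr
        · exact norm_inner_apply_cfc_div_add_le X hα0 hα1 hε x y
        · exact norm_apply_cfc_const_div_add_le X hε x
    _ = _ := by ring

theorem norm_inner_apply_le_mixed (X : H →L[ℂ] H) {α : ℝ} (hα0 : 0 ≤ α) (hα1 : α ≤ 1)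
    (x y : H) :
    ‖⟪X x, y⟫_ℂ‖ ≤ ‖opow (oabs X) α x‖ * ‖opow (oabs (adjoint X)) (1 - α) y‖ := by
  refine le_of_forall_pos_le_add fun δ hδ => ?_
  have hxy : 0 ≤ ‖x‖ * ‖y‖ := by positivity
  refine (norm_inner_apply_le_mixed_add X hα0 hα1
    (by positivity : 0 < δ / (‖x‖ * ‖y‖ + 1)) x y).trans ?_
  gcongr
  rw [div_mul_eq_mul_div, div_le_iff₀ (by positivity)]
  nlinarith

theorem opow_add {T : H →L[ℂ] H} (hT : 0 ≤ T) {e₁ e₂ : ℝ} (he₁ : 0 ≤ e₁) (he₂ : 0 ≤ e₂) :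
    opow T (e₁ + e₂) = opow T e₁ * opow T e₂ := by
  rw [opow, opow, opow, ← cfc_mul _ _ _ (Real.continuous_rpow_const he₁).continuousOn
    (Real.continuous_rpow_const he₂).continuousOn]
  exact cfc_congr fun s hs => Real.rpow_add_of_nonneg (spectrum_nonneg_of_nonneg hT hs) he₁ he₂

theorem re_inner_adjoint_mul_opow_two_mul_mul {T : H →L[ℂ] H} (hT : 0 ≤ T) {e : ℝ}
    (he : 0 ≤ e) (B : H →L[ℂ] H) (k : H) :
    (⟪(adjoint B * opow T (2 * e) * B) k, k⟫_ℂ).re = ‖opow T e (B k)‖ ^ 2 := by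
  have hP : adjoint (opow T e) = opow T e :=
    (cfc_predicate _ T : IsSelfAdjoint _).adjoint_eq
  nth_rewrite 1 [two_mul, opow_add hT he he, ← hP]
  simp [apply_norm_sq_eq_inner_adjoint_left, adjoint_inner_left]

theorem berezin_pointwise_mixed_schwarz_general (A B X : H →L[ℂ] H) (α : ℝ)
    (hα0 : 0 ≤ α) (hα1 : α ≤ 1) (k : H) :
    ‖⟪(ContinuousLinearMap.adjoint A * X * B) k, k⟫_ℂ‖ ≤
      (1 / 2) *
        (⟪(ContinuousLinearMap.adjoint B * opow (oabs X) (2 * α) * B +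
            ContinuousLinearMap.adjoint A *
              opow (oabs (ContinuousLinearMap.adjoint X)) (2 * (1 - α)) * A) k, k⟫_ℂ).re := by
  have hlhs : ⟪(adjoint A * X * B) k, k⟫_ℂ = ⟪X (B k), A k⟫_ℂ := by
    simp [adjoint_inner_left]
  rw [hlhs, add_apply, inner_add_left, Complex.add_re,
    re_inner_adjoint_mul_opow_two_mul_mul (oabs_nonneg X) hα0,
    re_inner_adjoint_mul_opow_two_mul_mul (oabs_nonneg _) (by linarith)]
  have := norm_inner_apply_le_mixed X hα0 hα1 (B k) (A k)
  linarith [two_mul_le_add_sq ‖opow (oabs X) α (B k)‖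
    ‖opow (oabs (adjoint X)) (1 - α) (A k)‖]

theorem berezin_pointwise_mixed_schwarz (A B X : H →L[ℂ] H) (α : ℝ)
    (hα0 : 0 ≤ α) (hα1 : α ≤ 1) (k : H) (hk : ‖k‖ = 1) :
    ‖⟪(ContinuousLinearMap.adjoint A * X * B) k, k⟫_ℂ‖ ≤
      (1 / 2) *
        (⟪(ContinuousLinearMap.adjoint B * opow (oabs X) (2 * α) * B +
            ContinuousLinearMap.adjoint A *
              opow (oabs (ContinuousLinearMap.adjoint X)) (2 * (1 - α)) * A) k, k⟫_ℂ).re :=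
  berezin_pointwise_mixed_schwarz_general A B X α hα0 hα1 k
end

section
/- Let A, B be bounded operators on a complex Hilbert space H. Then for every unit vector k, |⟨(AB + B*A) k, k⟩| ≤ (1/2)·⟨(|A| + |A*|) k, k⟩ + (1/2)·⟨B*(|A| + |A*|)B k, k⟩. -/
open scoped InnerProductSpace
open ContinuousLinearMap Complex

variable {H : Type*} [NormedAddCommGroup H] [InnerProductSpace ℂ H] [CompleteSpace H]

/-!
Both sides split along `⟪(AB + B*A) k, k⟫ = ⟪A (B k), k⟫ + ⟪A k, B k⟫`, so it suffices to prove the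
mixed Schwarz inequality in arithmetic-geometric form, `2 ‖⟪A u, v⟫‖ ≤ ⟪|A| u, u⟫ + ⟪|A*| v, v⟫`,
for `(u, v) = (B k, k)` and `(k, B k)`. For it, let `M = |A| + ε` with `ε > 0`. Positivity of
`⟪M w, w⟫` at `w = u - M⁻¹ A* v` gives `2 Re ⟪A u, v⟫ ≤ ⟪M u, u⟫ + ⟪A M⁻¹ A* v, v⟫`, and the
intertwining relation `A |A| = |A*| A` turns `A M⁻¹ A*` into `(|A*| + ε)⁻¹ |A*|²`, which is at most
`|A*|`. Letting `ε → 0` and rotating `v` by a phase gives the estimate.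
-/

open scoped Ring

namespace CFC

variable {A : Type*} [CStarAlgebra A] [PartialOrder A] [StarOrderedRing A]

lemma mul_abs_eq_abs_star_mul (a : A) : a * CFC.abs a = CFC.abs (star a) * a := by
  set p := CFC.abs a
  set q := CFC.abs (star a)
  have hp : 0 ≤ p := abs_nonneg a
  have hq : 0 ≤ q := abs_nonneg (star a)
  have hpp : p * p = star a * a := abs_mul_abs a
  have hqq : q * q = a * star a := by rw [abs_mul_abs, star_star]
  -- `star a * q * a` and `p * p * p` are both nonnegative square roots of `p ^ 6`
  have hcube : star a * q * a = p * p * p := by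
    have hsq : (star a * q * a) * (star a * q * a) = (p * p * p) * (p * p * p) := by
      calc (star a * q * a) * (star a * q * a) = star a * (q * (a * star a) * q) * a := by
            noncomm_ring
        _ = star a * (q * q) * (q * q) * a := by rw [← hqq]; noncomm_ring
        _ = (star a * a) * (star a * a) * (star a * a) := by rw [hqq]; noncomm_ring
        _ = (p * p * p) * (p * p * p) := by rw [← hpp]; noncomm_ring
    rw [← sqrt_mul_self (star a * q * a) (star_left_conjugate_nonneg hq a), hsq,
      sqrt_mul_self _ (by simpa [hp.star_eq] using star_left_conjugate_nonneg hp p)]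
  have hzero : star (a * p - q * a) * (a * p - q * a) = 0 := by
    have hq2 : star a * (q * q) * a = (p * p) * (p * p) := by rw [hqq, hpp]; noncomm_ring
    rw [star_sub, star_mul, star_mul, hp.star_eq, hq.star_eq]
    calc (p * star a - star a * q) * (a * p - q * a)
        = p * (star a * a) * p - p * (star a * q * a) - (star a * q * a) * p
          + star a * (q * q) * a := by noncomm_ring
      _ = 0 := by rw [hcube, hq2, ← hpp]; noncomm_ring
  exact sub_eq_zero.mp (CStarRing.star_mul_self_eq_zero_iff _ |>.mp hzero)

lemma ringInverse_add_algebraMap_mul_mul_self_le {b : A} (hb : 0 ≤ b) {ε : ℝ} (hε : 0 < ε) :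
    (b + algebraMap ℝ A ε)⁻¹ʳ * (b * b) ≤ b := by
  set n := b + algebraMap ℝ A ε
  have hn : IsStrictlyPositive n := .nonneg_add hb (isStrictlyPositive_algebraMap hε)
  have hcomm : Commute n⁻¹ʳ b := by
    obtain ⟨u, hu⟩ := hn.isUnit
    have : Commute b u := by
      rw [hu]; exact (Commute.refl b).add_right (Algebra.commutes ε b).symm
    rw [← hu, Ring.inverse_unit]
    exact this.units_inv_right.symm
  have hdiff : b - n⁻¹ʳ * (b * b) = ε • (n⁻¹ʳ * b) := by
    calc b - n⁻¹ʳ * (b * b) = n⁻¹ʳ * (n * b - b * b) := by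
          rw [mul_sub, Ring.inverse_mul_cancel_left _ _ hn.isUnit]
      _ = ε • (n⁻¹ʳ * b) := by
          rw [add_mul, add_sub_cancel_left, Algebra.algebraMap_eq_smul_one, smul_mul_assoc,
            one_mul, mul_smul_comm]
  rw [← sub_nonneg, hdiff]
  exact smul_nonneg hε.le (hcomm.mul_nonneg hn.ringInverse.nonneg hb)

lemma mul_ringInverse_abs_add_algebraMap_mul_star_le (a : A) {ε : ℝ} (hε : 0 < ε) :
    a * (CFC.abs a + algebraMap ℝ A ε)⁻¹ʳ * star a ≤ CFC.abs (star a) := by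
  set m := CFC.abs a + algebraMap ℝ A ε
  set n := CFC.abs (star a) + algebraMap ℝ A ε
  have hm : IsUnit m := (IsStrictlyPositive.nonneg_add (abs_nonneg a)
    (isStrictlyPositive_algebraMap hε)).isUnit
  have hn : IsUnit n := (IsStrictlyPositive.nonneg_add (abs_nonneg (star a))
    (isStrictlyPositive_algebraMap hε)).isUnit
  have hsemiconj : a * m = n * a := by
    rw [mul_add, add_mul, mul_abs_eq_abs_star_mul, Algebra.commutes]
  have hinv : a * m⁻¹ʳ = n⁻¹ʳ * a := by
    calc a * m⁻¹ʳ = n⁻¹ʳ * (n * a) * m⁻¹ʳ := by rw [Ring.inverse_mul_cancel_left _ _ hn]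
      _ = n⁻¹ʳ * a := by rw [← hsemiconj, ← mul_assoc, Ring.mul_inverse_cancel_right _ _ hm]
  calc a * m⁻¹ʳ * star a = n⁻¹ʳ * (CFC.abs (star a) * CFC.abs (star a)) := by
        rw [hinv, abs_mul_abs, star_star, mul_assoc]
    _ ≤ CFC.abs (star a) := ringInverse_add_algebraMap_mul_mul_self_le (abs_nonneg _) hε

end CFC

section InnerProductSpace

variable {E : Type*} [NormedAddCommGroup E] [InnerProductSpace ℂ E]

lemma ContinuousLinearMap.re_inner_le_re_inner_of_le_s9 {X Y : E →L[ℂ] E} (h : X ≤ Y) (v : E) :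
    (⟪X v, v⟫_ℂ).re ≤ (⟪Y v, v⟫_ℂ).re := by
  have := ((le_def X Y).mp h).re_inner_nonneg_left v
  rw [sub_apply, inner_sub_left, map_sub, RCLike.re_to_complex, RCLike.re_to_complex] at this
  linarith

lemma ContinuousLinearMap.re_inner_add_algebraMap (X : E →L[ℂ] E) (ε : ℝ) (u : E) :
    (⟪(X + algebraMap ℝ (E →L[ℂ] E) ε) u, u⟫_ℂ).re = (⟪X u, u⟫_ℂ).re + ε * ‖u‖ ^ 2 := by
  rw [add_apply, algebraMap_apply, inner_add_left, Complex.add_re,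
    RCLike.real_smul_eq_coe_smul (K := ℂ), inner_smul_real_left, Complex.smul_re,
    smul_eq_mul, ← inner_self_eq_norm_sq (𝕜 := ℂ)]
  rfl

end InnerProductSpace

lemma ContinuousLinearMap.two_mul_re_inner_le_of_isStrictlyPositive {M : H →L[ℂ] H}
    (hM : IsStrictlyPositive M) (x u : H) :
    2 * (⟪x, u⟫_ℂ).re ≤ (⟪M u, u⟫_ℂ).re + (⟪M⁻¹ʳ x, x⟫_ℂ).re := by
  have hMR : M (M⁻¹ʳ x) = x := by
    rw [← mul_apply_eq_comp, Ring.mul_inverse_cancel _ hM.isUnit]; rfl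
  have hcross : ⟪M u, M⁻¹ʳ x⟫_ℂ = ⟪u, x⟫_ℂ := by
    rw [← adjoint_inner_right, hM.isSelfAdjoint.adjoint_eq, hMR]
  have hquad : ⟪x, M⁻¹ʳ x⟫_ℂ = ⟪M⁻¹ʳ x, x⟫_ℂ := by
    rw [← adjoint_inner_right, hM.ringInverse.isSelfAdjoint.adjoint_eq]
  -- expand `0 ≤ re ⟪M w, w⟫` at `w = u - M⁻¹ x`
  have hnonneg := ((nonneg_iff_isPositive M).mp hM.nonneg).re_inner_nonneg_left (u - M⁻¹ʳ x)
  rw [map_sub, hMR, inner_sub_left, inner_sub_right, inner_sub_right, hcross, hquad,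
    ← inner_conj_symm u x] at hnonneg
  simp only [map_sub, RCLike.conj_re, RCLike.re_to_complex] at hnonneg
  linarith

lemma two_mul_re_inner_le_cfcAbs_add_mul_norm_sq (A : H →L[ℂ] H) (u v : H) {ε : ℝ}
    (hε : 0 < ε) :
    2 * (⟪A u, v⟫_ℂ).re ≤
      (⟪CFC.abs A u, u⟫_ℂ).re + ε * ‖u‖ ^ 2 + (⟪CFC.abs (adjoint A) v, v⟫_ℂ).re := by
  set M := CFC.abs A + algebraMap ℝ (H →L[ℂ] H) ε
  have hM : IsStrictlyPositive M :=
    .nonneg_add (CFC.abs_nonneg A) (isStrictlyPositive_algebraMap hε)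
  have key := two_mul_re_inner_le_of_isStrictlyPositive hM (adjoint A v) u
  have hcross : (⟪adjoint A v, u⟫_ℂ).re = (⟪A u, v⟫_ℂ).re := by
    rw [adjoint_inner_left, ← inner_conj_symm, Complex.conj_re]
  have hquad : (⟪M⁻¹ʳ (adjoint A v), adjoint A v⟫_ℂ).re ≤
      (⟪CFC.abs (adjoint A) v, v⟫_ℂ).re := by
    rw [adjoint_inner_right]
    refine re_inner_le_re_inner_of_le_s9 (X := A * M⁻¹ʳ * adjoint A) ?_ v
    simpa only [star_eq_adjoint] using CFC.mul_ringInverse_abs_add_algebraMap_mul_star_le A hε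
  rw [re_inner_add_algebraMap, hcross] at key
  linarith

lemma two_mul_re_inner_le_cfcAbs (A : H →L[ℂ] H) (u v : H) :
    2 * (⟪A u, v⟫_ℂ).re ≤ (⟪CFC.abs A u, u⟫_ℂ).re + (⟪CFC.abs (adjoint A) v, v⟫_ℂ).re := by
  refine le_of_forall_pos_le_add fun δ hδ => ?_
  have h :=
    two_mul_re_inner_le_cfcAbs_add_mul_norm_sq A u v (ε := δ / (‖u‖ ^ 2 + 1)) (by positivity)
  have hsmall : δ / (‖u‖ ^ 2 + 1) * ‖u‖ ^ 2 ≤ δ := by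
    rw [div_mul_eq_mul_div, div_le_iff₀ (by positivity)]
    gcongr
    linarith
  linarith

lemma two_mul_norm_inner_le_cfcAbs (A : H →L[ℂ] H) (u v : H) :
    2 * ‖⟪A u, v⟫_ℂ‖ ≤ (⟪CFC.abs A u, u⟫_ℂ).re + (⟪CFC.abs (adjoint A) v, v⟫_ℂ).re := by
  obtain ⟨c, hc, hcz⟩ := Complex.exists_norm_eq_mul_self ⟪A u, v⟫_ℂ
  have h := two_mul_re_inner_le_cfcAbs A u (c • v)
  rw [inner_smul_right, ← hcz, ofReal_re, map_smul, inner_smul_left, inner_smul_right,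
    ← mul_assoc, conj_mul', hc] at h
  simpa using h

lemma oabs_eq_cfcAbs (T : H →L[ℂ] H) : oabs T = CFC.abs T := by
  rw [oabs, CFC.abs, CFC.sqrt_eq_real_sqrt _ (star_mul_self_nonneg T), cfcₙ_eq_cfc,
    star_eq_adjoint]

theorem berezin_pointwise_AB_plus_BstarA_general (A B : H →L[ℂ] H) (k : H) :
    ‖⟪(A * B + ContinuousLinearMap.adjoint B * A) k, k⟫_ℂ‖ ≤
      (1 / 2) * (⟪(oabs A + oabs (ContinuousLinearMap.adjoint A)) k, k⟫_ℂ).re +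
      (1 / 2) *
        (⟪(ContinuousLinearMap.adjoint B *
            (oabs A + oabs (ContinuousLinearMap.adjoint A)) * B) k, k⟫_ℂ).re := by
  have h₁ := two_mul_norm_inner_le_cfcAbs A (B k) k
  have h₂ := two_mul_norm_inner_le_cfcAbs A k (B k)
  have hsplit : ⟪(A * B + adjoint B * A) k, k⟫_ℂ = ⟪A (B k), k⟫_ℂ + ⟪A k, B k⟫_ℂ := by
    rw [add_apply, inner_add_left, mul_apply_eq_comp, mul_apply_eq_comp, adjoint_inner_left]
  rw [hsplit, mul_apply_eq_comp, mul_apply_eq_comp, adjoint_inner_left, add_apply, add_apply,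
    inner_add_left, inner_add_left, add_re, add_re, oabs_eq_cfcAbs, oabs_eq_cfcAbs]
  linarith [norm_add_le ⟪A (B k), k⟫_ℂ ⟪A k, B k⟫_ℂ]

theorem berezin_pointwise_AB_plus_BstarA (A B : H →L[ℂ] H) (k : H) (hk : ‖k‖ = 1) :
    ‖⟪(A * B + ContinuousLinearMap.adjoint B * A) k, k⟫_ℂ‖ ≤
      (1 / 2) * (⟪(oabs A + oabs (ContinuousLinearMap.adjoint A)) k, k⟫_ℂ).re +
      (1 / 2) *
        (⟪(ContinuousLinearMap.adjoint B *
            (oabs A + oabs (ContinuousLinearMap.adjoint A)) * B) k, k⟫_ℂ).re :=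
  berezin_pointwise_AB_plus_BstarA_general A B k
end
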